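/- Let θ ∈ (0, π) and let h be a positive solution of det(∇²h + hσ) = f·h^{p-1}(h² + |∇h|²)^{(n+1-q)/2} in C_θ with ∇_μ h = cot θ · h on ∂C_θ. Then the capillary support function u := h/l satisfies det( l·∇²u + cos θ·(∇u ⊗ e^T + e^T ⊗ ∇u) + u·σ ) = f·(ul)^{p-1}·((ul)² + |∇(ul)|²)^{(n+1-q)/2} in C_θ and ∇_μ u = 0 on ∂C_θ, where e^T denotes the tangential projection of the vector e onto the tangent space of C_θ. -/

import Mathlib

/- Formalization of statements from "The L_p dual Minkowski problem for capillary
hypersurfaces".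

We work in the ambient space `ℝ^{n+1}`.  The spherical cap `C_θ` is the part of the unit
sphere centred at `cos θ • e` (where `e = -E_{n+1}`) lying in the closed upper half-space.
Functions on `C_θ` are represented by ambient functions `h : Euc n → ℝ`; the intrinsic
(round-metric) gradient `∇h` and Hessian `∇²h` of the restriction of `h` to `C_θ` are
expressed through ambient derivatives (for tangential arguments these expressions depend
only on the restriction of `h` to the cap).  The quantity `det(∇²h + hσ)` is encoded as the
determinant of the endomorphism of `ℝ^{n+1}` acting as `∇²h + hσ` on the tangent space of
the cap and as the identity on the normal line. -/

open Real Set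
open scoped RealInnerProductSpace

noncomputable section

/-- Ambient Euclidean space `ℝ^{n+1}`. -/
abbrev Euc (n : ℕ) : Type := EuclideanSpace ℝ (Fin (n + 1))

/-- The unit vector `e = -E_{n+1}`. -/
def eVec (n : ℕ) : Euc n := -(EuclideanSpace.single (Fin.last n) (1 : ℝ))

/-- `ν(ξ) = ξ - cos θ • e`, the unit normal (at `ξ`) of the sphere containing the cap `C_θ`. -/
def sphNormal (n : ℕ) (θ : ℝ) (ξ : Euc n) : Euc n := ξ - Real.cos θ • eVec n

/-- The spherical cap `C_θ = {ξ ∈ closure ℝ^{n+1}_+ : |ξ - cos θ • e| = 1}`. -/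
def cap (n : ℕ) (θ : ℝ) : Set (Euc n) :=
  {ξ | 0 ≤ ξ (Fin.last n) ∧ ‖sphNormal n θ ξ‖ = 1}

/-- The boundary `∂C_θ`. -/
def capBdry (n : ℕ) (θ : ℝ) : Set (Euc n) :=
  {ξ | ξ (Fin.last n) = 0 ∧ ‖sphNormal n θ ξ‖ = 1}

/-- The outward unit conormal `μ` of `∂C_θ` in `C_θ` (at boundary points). -/
def conormal (n : ℕ) (θ : ℝ) (ξ : Euc n) : Euc n :=
  Real.cot θ • ξ + Real.sin θ • eVec n

/-- Orthogonal projection of `ℝ^{n+1}` onto the tangent space of the cap at `ξ`. -/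
def tproj (n : ℕ) (θ : ℝ) (ξ : Euc n) : Euc n →L[ℝ] Euc n :=
  ContinuousLinearMap.id ℝ (Euc n) - (innerSL ℝ (sphNormal n θ ξ)).smulRight (sphNormal n θ ξ)

/-- `X` is tangent to the cap at `ξ`. -/
def IsTangent (n : ℕ) (θ : ℝ) (ξ X : Euc n) : Prop :=
  ⟪X, sphNormal n θ ξ⟫ = 0

/-- Intrinsic (round-metric) gradient `∇h` of `h` on the cap. -/
def sgrad (n : ℕ) (θ : ℝ) (h : Euc n → ℝ) (ξ : Euc n) : Euc n :=
  tproj n θ ξ (gradient h ξ)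

/-- Intrinsic (round-metric) Hessian `∇²h(X,Y)` of `h` on the cap (tangential arguments). -/
def shess (n : ℕ) (θ : ℝ) (h : Euc n → ℝ) (ξ X Y : Euc n) : ℝ :=
  ⟪(fderiv ℝ (gradient h) ξ) X, Y⟫ - ⟪gradient h ξ, sphNormal n θ ξ⟫ * ⟪X, Y⟫

/-- Endomorphism representing the intrinsic Hessian `∇²h` on tangent vectors
(and vanishing on the normal line). -/
def thessOp (n : ℕ) (θ : ℝ) (h : Euc n → ℝ) (ξ : Euc n) : Euc n →L[ℝ] Euc n :=
  ((tproj n θ ξ).comp ((fderiv ℝ (gradient h) ξ).comp (tproj n θ ξ)))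
    - ⟪gradient h ξ, sphNormal n θ ξ⟫ • tproj n θ ξ

/-- Rank-one projection onto the normal direction at `ξ`. -/
def normalPart (n : ℕ) (θ : ℝ) (ξ : Euc n) : Euc n →L[ℝ] Euc n :=
  (innerSL ℝ (sphNormal n θ ξ)).smulRight (sphNormal n θ ξ)

/-- Endomorphism acting as `∇²h + hσ` on the tangent space and as the identity on the
normal line. -/
def hessOp (n : ℕ) (θ : ℝ) (h : Euc n → ℝ) (ξ : Euc n) : Euc n →L[ℝ] Euc n :=
  thessOp n θ h ξ + h ξ • tproj n θ ξ + normalPart n θ ξ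

/-- `det(∇²h + hσ)` at `ξ`. -/
def sdet (n : ℕ) (θ : ℝ) (h : Euc n → ℝ) (ξ : Euc n) : ℝ :=
  LinearMap.det (hessOp n θ h ξ).toLinearMap

/-- `h > 0` on the cap. -/
def PosOnCap (n : ℕ) (θ : ℝ) (h : Euc n → ℝ) : Prop := ∀ ξ ∈ cap n θ, 0 < h ξ

/-- Convexity of a solution: `∇²h + hσ > 0` on the cap. -/
def IsConvexSol (n : ℕ) (θ : ℝ) (h : Euc n → ℝ) : Prop :=
  ∀ ξ ∈ cap n θ, ∀ X : Euc n, IsTangent n θ ξ X → X ≠ 0 →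
    0 < shess n θ h ξ X X + h ξ * ⟪X, X⟫

/-- The right-hand side `f·h^{p-1}·(h² + |∇h|²)^{(n+1-q)/2}`. -/
def eqRHS (n : ℕ) (θ p q : ℝ) (f h : Euc n → ℝ) (ξ : Euc n) : ℝ :=
  f ξ * h ξ ^ (p - 1) * (h ξ ^ 2 + ‖sgrad n θ h ξ‖ ^ 2) ^ (((n : ℝ) + 1 - q) / 2)

/-- `h` solves `det(∇²h + hσ) = f·h^{p-1}(h² + |∇h|²)^{(n+1-q)/2}` in `C_θ`. -/
def SolvesEq (n : ℕ) (θ p q : ℝ) (f h : Euc n → ℝ) : Prop :=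
  ∀ ξ ∈ cap n θ, sdet n θ h ξ = eqRHS n θ p q f h ξ

/-- Robin boundary condition `∇_μ h = cot θ · h` on `∂C_θ`. -/
def RobinBC (n : ℕ) (θ : ℝ) (h : Euc n → ℝ) : Prop :=
  ∀ ξ ∈ capBdry n θ, ⟪sgrad n θ h ξ, conormal n θ ξ⟫ = Real.cot θ * h ξ

/-- `l(ξ) = sin²θ + cos θ·⟨ξ, e⟩`. -/
def lFun (n : ℕ) (θ : ℝ) (ξ : Euc n) : ℝ :=
  Real.sin θ ^ 2 + Real.cos θ * ⟪ξ, eVec n⟫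

/-- `‖f‖_{C⁰(C_θ)} ≤ K`. -/
def CZeroNormLe (n : ℕ) (θ : ℝ) (f : Euc n → ℝ) (K : ℝ) : Prop :=
  ∀ ξ ∈ cap n θ, |f ξ| ≤ K

/-- `‖f‖_{C¹(C_θ)} ≤ K`. -/
def COneNormLe (n : ℕ) (θ : ℝ) (f : Euc n → ℝ) (K : ℝ) : Prop :=
  CZeroNormLe n θ f K ∧ ∀ ξ ∈ cap n θ, ‖sgrad n θ f ξ‖ ≤ K

/-- `‖f‖_{C²(C_θ)} ≤ K`. -/
def CTwoNormLe (n : ℕ) (θ : ℝ) (f : Euc n → ℝ) (K : ℝ) : Prop :=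
  COneNormLe n θ f K ∧
    ∀ ξ ∈ cap n θ, ∀ X Y : Euc n, IsTangent n θ ξ X → IsTangent n θ ξ Y →
      |shess n θ f ξ X Y| ≤ K * ‖X‖ * ‖Y‖

/-- The linearized operator `L_h(γ)` of the equation `𝒢(∇²h,h) = 𝒥₁(∇h,h)` at `h`:
the derivative at `ε = 0` of `𝒢 - 𝒥₁` along the variation `h_ε = h·e^{εγ}`
(cf. equation (5.4) of the paper, which is exactly this derivative). -/
def linOp (n : ℕ) (θ p q : ℝ) (f h γ : Euc n → ℝ) (ξ : Euc n) : ℝ :=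
  deriv (fun ε : ℝ =>
    sdet n θ (fun x => h x * Real.exp (ε * γ x)) ξ
      - eqRHS n θ p q f (fun x => h x * Real.exp (ε * γ x)) ξ) 0

/-- Endomorphism acting as `l·∇²u + cos θ·(∇u ⊗ e^T + e^T ⊗ ∇u) + uσ` on the tangent space
and as the identity on the normal line. -/
def capillaryOp (n : ℕ) (θ : ℝ) (u : Euc n → ℝ) (ξ : Euc n) : Euc n →L[ℝ] Euc n :=
  lFun n θ ξ • thessOp n θ u ξ
    + Real.cos θ • ((innerSL ℝ (sgrad n θ u ξ)).smulRight (tproj n θ ξ (eVec n))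
        + (innerSL ℝ (tproj n θ ξ (eVec n))).smulRight (sgrad n θ u ξ))
    + u ξ • tproj n θ ξ + normalPart n θ ξ

/-- Endomorphism acting as `∇²v + ∇v ⊗ ∇v + σ` on the tangent space and as the identity on
the normal line. -/
def logOp (n : ℕ) (θ : ℝ) (v : Euc n → ℝ) (ξ : Euc n) : Euc n →L[ℝ] Euc n :=
  thessOp n θ v ξ + (innerSL ℝ (sgrad n θ v ξ)).smulRight (sgrad n θ v ξ)
    + tproj n θ ξ + normalPart n θ ξ

/-- Geodesic distance on `C_θ` from `ξ` to the top point `N = (0,…,0,1-cos θ)`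
(for `θ ∈ (0,π/2)` the cap is geodesically convex, so this is `arccos ⟨ν(ξ), ν(N)⟩`). -/
def distToTop (n : ℕ) (θ : ℝ) (ξ : Euc n) : ℝ :=
  Real.arccos (ξ (Fin.last n) + Real.cos θ)

/-- The function `d := d_N²/(2θ)`. -/
def dCap (n : ℕ) (θ : ℝ) (ξ : Euc n) : ℝ := distToTop n θ ξ ^ 2 / (2 * θ)

/-! Write `h = u l`. The ambient gradient of `l` is `cos θ • e`, so `∇h = l ∇u + u cos θ e` and
`D∇h = l D∇u + cos θ (e ⊗ ∇u + ∇u ⊗ e)`. Since `l = 1 + cos θ ⟨e, ν⟩`, the normal component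
`⟨∇h, ν⟩ = l ⟨∇u, ν⟩ + u (l - 1)` entering the intrinsic Hessian turns `∇²h + hσ` into
`l ∇²u + cos θ (∇u ⊗ eᵀ + eᵀ ⊗ ∇u) + uσ` exactly, so the two determinants agree pointwise.
On `∂C_θ`, `∇_μ h = l ∇_μ u + u ∇_μ l = l ∇_μ u + cot θ · h`, so the Robin condition for `h`
is `l ∇_μ u = 0`; and `l > 0` on the whole sphere because `|cos θ| < 1`. -/

open InnerProductSpace Filter Topology

section Gradient

variable {F : Type*} [NormedAddCommGroup F] [InnerProductSpace ℝ F] [CompleteSpace F]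
  {f g : F → ℝ} {a b x : F}

theorem HasGradientAt.mul (hf : HasGradientAt f a x) (hg : HasGradientAt g b x) :
    HasGradientAt (fun y => f y * g y) (f x • b + g x • a) x := by
  rw [hasGradientAt_iff_hasFDerivAt] at hf hg ⊢
  refine (hf.mul hg).congr_fderiv ?_
  ext y
  simp

theorem ContDiffAt.differentiableAt_gradient (hf : ContDiffAt ℝ 2 f x) :
    DifferentiableAt ℝ (gradient f) x :=
  (toDual ℝ F).symm.toContinuousLinearEquiv.differentiableAt.comp x
    ((hf.fderiv_right (m := 1) (by norm_num)).differentiableAt one_ne_zero)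

end Gradient

theorem Real.cot_mul_sin_sq (x : ℝ) : Real.cot x * Real.sin x ^ 2 = Real.cos x * Real.sin x := by
  rw [Real.cot_eq_cos_div_sin]
  rcases eq_or_ne (Real.sin x) 0 with hs | hs
  · simp [hs]
  · field_simp

section Cap

variable {n : ℕ} {θ : ℝ}

theorem inner_eVec_self : ⟪eVec n, eVec n⟫ = 1 := by
  simp [eVec]

theorem norm_eVec : ‖eVec n‖ = 1 := by
  simp [eVec]

theorem hasGradientAt_lFun (ξ : Euc n) : HasGradientAt (lFun n θ) (Real.cos θ • eVec n) ξ := by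
  rw [hasGradientAt_iff_hasFDerivAt]
  have hl : lFun n θ = fun x => Real.sin θ ^ 2 + Real.cos θ * innerSL ℝ (eVec n) x := by
    funext x; simp [lFun, real_inner_comm]
  rw [hl]
  refine (((innerSL ℝ (eVec n)).hasFDerivAt.const_mul _).const_add _).congr_fderiv ?_
  ext y; simp

theorem contDiff_lFun {k : WithTop ℕ∞} : ContDiff ℝ k (lFun n θ) :=
  contDiff_const.add (contDiff_const.mul (contDiff_id.inner ℝ contDiff_const))

theorem lFun_eq_one_add (ξ : Euc n) :
    lFun n θ ξ = 1 + Real.cos θ * ⟪eVec n, sphNormal n θ ξ⟫ := by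
  rw [sphNormal, inner_sub_right, real_inner_smul_right, inner_eVec_self, lFun,
    real_inner_comm]
  linear_combination Real.sin_sq_add_cos_sq θ

theorem lFun_pos (hθ : θ ∈ Ioo 0 π) {ξ : Euc n} (hξ : ‖sphNormal n θ ξ‖ = 1) :
    0 < lFun n θ ξ := by
  have hsin := Real.sin_pos_of_pos_of_lt_pi hθ.1 hθ.2
  have hcos : |Real.cos θ| < 1 := by
    rw [← sq_lt_one_iff_abs_lt_one]; nlinarith [Real.sin_sq_add_cos_sq θ]
  have hinner : |⟪eVec n, sphNormal n θ ξ⟫| ≤ 1 := by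
    simpa [norm_eVec, hξ] using abs_real_inner_le_norm (eVec n) (sphNormal n θ ξ)
  have hprod : |Real.cos θ * ⟪eVec n, sphNormal n θ ξ⟫| < 1 := by
    rw [abs_mul]; exact mul_lt_one_of_nonneg_of_lt_one_left (abs_nonneg _) hcos hinner
  rw [lFun_eq_one_add]
  linarith [(abs_lt.mp hprod).1]

theorem tproj_apply (ξ X : Euc n) :
    tproj n θ ξ X = X - ⟪sphNormal n θ ξ, X⟫ • sphNormal n θ ξ := by
  simp [tproj]

theorem inner_tproj_left (ξ X Y : Euc n) :
    ⟪tproj n θ ξ X, Y⟫ = ⟪X, tproj n θ ξ Y⟫ := by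
  simp only [tproj_apply, inner_sub_left, inner_sub_right, real_inner_smul_left,
    real_inner_smul_right, real_inner_comm X (sphNormal n θ ξ)]
  ring

theorem gradient_mul_lFun {u : Euc n → ℝ} {ξ : Euc n} (hu : DifferentiableAt ℝ u ξ) :
    gradient (fun x => u x * lFun n θ x) ξ
      = lFun n θ ξ • gradient u ξ + (Real.cos θ * u ξ) • eVec n := by
  rw [(hu.hasGradientAt.mul (hasGradientAt_lFun ξ)).gradient, smul_smul, add_comm, mul_comm]

theorem sgrad_mul_lFun {u : Euc n → ℝ} {ξ : Euc n} (hu : DifferentiableAt ℝ u ξ) :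
    sgrad n θ (fun x => u x * lFun n θ x) ξ
      = lFun n θ ξ • sgrad n θ u ξ + u ξ • sgrad n θ (lFun n θ) ξ := by
  rw [sgrad, sgrad, sgrad, gradient_mul_lFun hu, (hasGradientAt_lFun ξ).gradient, map_add,
    map_smul, map_smul, map_smul, smul_smul, mul_comm (Real.cos θ)]

theorem fderiv_gradient_mul_lFun {u : Euc n → ℝ} {ξ : Euc n} (hu : ContDiffAt ℝ 2 u ξ)
    (Y : Euc n) :
    fderiv ℝ (gradient fun x => u x * lFun n θ x) ξ Y
      = (Real.cos θ * ⟪eVec n, Y⟫) • gradient u ξ + lFun n θ ξ • fderiv ℝ (gradient u) ξ Y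
        + (Real.cos θ * ⟪gradient u ξ, Y⟫) • eVec n := by
  have hgrad : (gradient fun x => u x * lFun n θ x) =ᶠ[𝓝 ξ]
      fun x => lFun n θ x • gradient u x + (Real.cos θ * u x) • eVec n := by
    filter_upwards [hu.eventually (by simp)] with x hx
    exact gradient_mul_lFun (hx.differentiableAt two_ne_zero)
  have hderiv : HasFDerivAt
      (fun x => lFun n θ x • gradient u x + (Real.cos θ * u x) • eVec n) _ ξ :=
    ((hasGradientAt_lFun ξ).hasFDerivAt.smul hu.differentiableAt_gradient.hasFDerivAt).add
      (((hu.differentiableAt two_ne_zero).hasFDerivAt.const_mul _).smul_const _)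
  rw [hgrad.fderiv_eq, hderiv.fderiv]
  simp only [add_apply, smul_apply, map_smul, ContinuousLinearMap.smulRight_apply,
    toDual_apply_apply, smul_eq_mul, ← inner_gradient_left]
  module

theorem capillaryOp_eq_hessOp_mul_lFun {u : Euc n → ℝ} {ξ : Euc n} (hu : ContDiffAt ℝ 2 u ξ) :
    capillaryOp n θ u ξ = hessOp n θ (fun x => u x * lFun n θ x) ξ := by
  ext1 X
  simp only [capillaryOp, hessOp, thessOp, normalPart, sgrad, add_apply, sub_apply, smul_apply,
    ContinuousLinearMap.comp_apply, ContinuousLinearMap.smulRight_apply, innerSL_apply_apply,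
    fderiv_gradient_mul_lFun hu, gradient_mul_lFun (hu.differentiableAt two_ne_zero), map_add,
    map_smul, inner_add_left, real_inner_smul_left, inner_tproj_left, lFun_eq_one_add ξ]
  match_scalars <;> ring

section Locality

variable {h₁ h₂ : Euc n → ℝ} {ξ : Euc n}

theorem Filter.EventuallyEq.sgrad_eq (hh : h₁ =ᶠ[𝓝 ξ] h₂) : sgrad n θ h₁ ξ = sgrad n θ h₂ ξ := by
  rw [sgrad, sgrad, hh.gradient_eq]

theorem Filter.EventuallyEq.sdet_eq (hh : h₁ =ᶠ[𝓝 ξ] h₂) : sdet n θ h₁ ξ = sdet n θ h₂ ξ := by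
  rw [sdet, sdet, hessOp, hessOp, thessOp, thessOp, hh.gradient_eq, hh.gradient.fderiv_eq,
    hh.eq_of_nhds]

theorem Filter.EventuallyEq.eqRHS_eq {p q : ℝ} {f : Euc n → ℝ} (hh : h₁ =ᶠ[𝓝 ξ] h₂) :
    eqRHS n θ p q f h₁ ξ = eqRHS n θ p q f h₂ ξ := by
  rw [eqRHS, eqRHS, hh.sgrad_eq, hh.eq_of_nhds]

end Locality

section Boundary

variable {ξ : Euc n}

theorem capBdry_subset_cap : capBdry n θ ⊆ cap n θ :=
  fun _ hξ => ⟨hξ.1.ge, hξ.2⟩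

theorem inner_eVec_of_mem_capBdry (hξ : ξ ∈ capBdry n θ) : ⟪ξ, eVec n⟫ = 0 := by
  simp [eVec, EuclideanSpace.inner_single_right, hξ.1]

theorem inner_self_of_mem_capBdry (hξ : ξ ∈ capBdry n θ) : ⟪ξ, ξ⟫ = Real.sin θ ^ 2 := by
  have hν : ⟪sphNormal n θ ξ, sphNormal n θ ξ⟫ = 1 := by simp [hξ.2]
  simp only [sphNormal, inner_sub_left, inner_sub_right, real_inner_smul_left,
    real_inner_smul_right, inner_eVec_of_mem_capBdry hξ, real_inner_comm ξ (eVec n),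
    inner_eVec_self] at hν
  linear_combination hν - Real.sin_sq_add_cos_sq θ

theorem lFun_of_mem_capBdry (hξ : ξ ∈ capBdry n θ) : lFun n θ ξ = Real.sin θ ^ 2 := by
  simp [lFun, inner_eVec_of_mem_capBdry hξ]

theorem inner_sphNormal_conormal (hξ : ξ ∈ capBdry n θ) :
    ⟪sphNormal n θ ξ, conormal n θ ξ⟫ = 0 := by
  simp only [sphNormal, conormal, inner_sub_left, inner_add_right, real_inner_smul_left,
    real_inner_smul_right, inner_self_of_mem_capBdry hξ, inner_eVec_of_mem_capBdry hξ,
    real_inner_comm ξ (eVec n), inner_eVec_self]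
  linear_combination Real.cot_mul_sin_sq θ

theorem inner_sgrad_lFun_conormal (hξ : ξ ∈ capBdry n θ) :
    ⟪sgrad n θ (lFun n θ) ξ, conormal n θ ξ⟫ = Real.cot θ * lFun n θ ξ := by
  rw [sgrad, (hasGradientAt_lFun ξ).gradient, inner_tproj_left, tproj_apply,
    real_inner_comm, inner_sphNormal_conormal hξ, zero_smul, sub_zero, lFun_of_mem_capBdry hξ]
  simp only [conormal, inner_add_left, real_inner_smul_left, real_inner_smul_right,
    inner_eVec_of_mem_capBdry hξ, inner_eVec_self]
  linear_combination -Real.cot_mul_sin_sq θ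

end Boundary

end Cap

theorem capillary_support_function_equation_general
    (n : ℕ) (θ p q : ℝ) (hθ : θ ∈ Set.Ioo 0 π)
    (f : Euc n → ℝ)
    (h : Euc n → ℝ) (hh : ContDiff ℝ 2 h)
    (heq : SolvesEq n θ p q f h) (hR : RobinBC n θ h) :
    (∀ ξ ∈ cap n θ,
      LinearMap.det (capillaryOp n θ (fun x => h x / lFun n θ x) ξ).toLinearMap =
        f ξ * ((fun x => h x / lFun n θ x) ξ * lFun n θ ξ) ^ (p - 1) *
          (((fun x => h x / lFun n θ x) ξ * lFun n θ ξ) ^ 2 +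
            ‖sgrad n θ (fun x => (h x / lFun n θ x) * lFun n θ x) ξ‖ ^ 2) ^
              (((n : ℝ) + 1 - q) / 2)) ∧
    (∀ ξ ∈ capBdry n θ,
      ⟪sgrad n θ (fun x => h x / lFun n θ x) ξ, conormal n θ ξ⟫ = 0) := by
  set u := fun x => h x / lFun n θ x
  have hl {ξ} (hξ : ξ ∈ cap n θ) : lFun n θ ξ ≠ 0 := (lFun_pos hθ hξ.2).ne'
  have hu {ξ} (hξ : ξ ∈ cap n θ) : ContDiffAt ℝ 2 u ξ :=
    hh.contDiffAt.div contDiff_lFun.contDiffAt (hl hξ)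
  have hul {ξ} (hξ : ξ ∈ cap n θ) : (fun x => u x * lFun n θ x) =ᶠ[𝓝 ξ] h := by
    filter_upwards [(contDiff_lFun (k := 0)).continuous.continuousAt.eventually_ne (hl hξ)]
      with x hx
    exact div_mul_cancel₀ _ hx
  refine ⟨fun ξ hξ => ?_, fun ξ hξ => ?_⟩
  · calc LinearMap.det (capillaryOp n θ u ξ).toLinearMap
        = sdet n θ (fun x => u x * lFun n θ x) ξ := by
          rw [capillaryOp_eq_hessOp_mul_lFun (hu hξ), sdet]
      _ = eqRHS n θ p q f h ξ := (hul hξ).sdet_eq.trans (heq ξ hξ)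
      _ = eqRHS n θ p q f (fun x => u x * lFun n θ x) ξ := (hul hξ).eqRHS_eq.symm
  · have hξ' := capBdry_subset_cap hξ
    have hRobin := hR ξ hξ
    rw [← (hul hξ').sgrad_eq, sgrad_mul_lFun ((hu hξ').differentiableAt two_ne_zero),
      inner_add_left, real_inner_smul_left, real_inner_smul_left,
      inner_sgrad_lFun_conormal hξ, ← (hul hξ').eq_of_nhds] at hRobin
    have hneumann : lFun n θ ξ * ⟪sgrad n θ u ξ, conormal n θ ξ⟫ = 0 := by
      linear_combination hRobin
    exact (mul_eq_zero.mp hneumann).resolve_left (hl hξ')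

/-- equation (3.4): if `h` is a positive solution of the Monge–Ampère
equation with Robin boundary condition, then the capillary support function `u := h/l`
satisfies `det(l∇²u + cos θ(∇u ⊗ e^T + e^T ⊗ ∇u) + uσ)
  = f·(ul)^{p-1}((ul)² + |∇(ul)|²)^{(n+1-q)/2}` in `C_θ` and `∇_μ u = 0` on `∂C_θ`. -/
theorem capillary_support_function_equation
    (n : ℕ) (hn : 1 ≤ n) (θ p q : ℝ) (hθ : θ ∈ Set.Ioo 0 π)
    (f : Euc n → ℝ)
    (h : Euc n → ℝ) (hh : ContDiff ℝ 2 h) (hpos : PosOnCap n θ h)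
    (heq : SolvesEq n θ p q f h) (hR : RobinBC n θ h) :
    (∀ ξ ∈ cap n θ,
      LinearMap.det (capillaryOp n θ (fun x => h x / lFun n θ x) ξ).toLinearMap =
        f ξ * ((fun x => h x / lFun n θ x) ξ * lFun n θ ξ) ^ (p - 1) *
          (((fun x => h x / lFun n θ x) ξ * lFun n θ ξ) ^ 2 +
            ‖sgrad n θ (fun x => (h x / lFun n θ x) * lFun n θ x) ξ‖ ^ 2) ^
              (((n : ℝ) + 1 - q) / 2)) ∧
    (∀ ξ ∈ capBdry n θ,
      ⟪sgrad n θ (fun x => h x / lFun n θ x) ξ, conormal n θ ξ⟫ = 0) :=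
  capillary_support_function_equation_general n θ p q hθ f h hh heq hR
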